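/- arXiv:1210.1923 — 2 statements merged into one kernel-verified Lean document; each statement's English description precedes it below -/
import Mathlib

section
/- Let A, A' be affine spaces with dim A' ≥ 3 and φ : L → L' a bijection of line sets such that a ∼ b implies φ(a) ∼' φ(b) (meeting lines go to meeting lines). Then the induced map λ : P → P', a ∩ b ↦ φ(a) ∩ φ(b) for adjacent a, b, is a well-defined injection preserving collinearity and non-collinearity of points, and φ(L(Q)) = L'(λ(Q)) for every point Q. -/
/-! The images under `φ` of the lines through a point `Q` pairwise meet. If they were not
concurrent, three of them would form a triangle, every other image would meet its three sides
and hence lie in its plane; as `dim A' ≥ 3`, some line of `A'` misses that plane, yet its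
preimage meets a line through `Q`. So the images are concurrent in a point `λ Q`. The remaining
claims follow from the bijectivity of `φ`, since two distinct points determine a line. -/

variable (k V P : Type*) [DivisionRing k] [AddCommGroup V] [Module k V] [AddTorsor V P]

def IsPLine (s : Set P) : Prop :=
  ∃ (p : P) (v : V), v ≠ 0 ∧ s = {q | ∃ t : k, q = t • v +ᵥ p}

abbrev PLine : Type _ := {s : Set P // IsPLine k V P s}

def PMeets (a b : PLine k V P) : Prop := (a.1 ∩ b.1).Nonempty

variable (k' V' P' : Type*) [DivisionRing k'] [AddCommGroup V'] [Module k' V'] [AddTorsor V' P']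

section Coplanar

variable {k V P}

theorem collinear_triple_iff_of_ne {p₁ p₂ : P} (h : p₁ ≠ p₂) (p₃ : P) :
    Collinear k ({p₁, p₂, p₃} : Set P) ↔ p₃ ∈ line[k, p₁, p₂] := by
  refine ⟨fun hc => hc.mem_affineSpan_of_mem_of_ne (by simp) (by simp) (by simp) h, fun hp => ?_⟩
  rw [Set.pair_comm, Set.insert_comm]
  exact collinear_insert_of_mem_affineSpan_pair hp

theorem Coplanar.vectorSpan_ne_top {s : Set P} (hs : Coplanar k s) (h3 : 3 ≤ Module.rank k V) :
    vectorSpan k s ≠ ⊤ := by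
  intro htop
  have h : (3 : Cardinal) ≤ 2 := by
    calc (3 : Cardinal) ≤ Module.rank k V := h3
      _ = Module.rank k (vectorSpan k s) := by rw [htop, rank_top]
      _ ≤ 2 := hs
  norm_num at h

end Coplanar

namespace PLine

variable {k V P}

theorem setOf_smul_vadd_eq_affineSpan_pair (p : P) (v : V) :
    {q | ∃ t : k, q = t • v +ᵥ p} = (line[k, p, v +ᵥ p] : Set P) := by
  ext q
  rw [SetLike.mem_coe, ← vsub_vadd q p, vadd_left_mem_affineSpan_pair, vadd_vsub]
  exact exists_congr fun t => by rw [vadd_right_cancel_iff, eq_comm]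

theorem isPLine_iff {s : Set P} :
    IsPLine k V P s ↔ ∃ x y : P, x ≠ y ∧ s = line[k, x, y] := by
  constructor
  · rintro ⟨p, v, hv, rfl⟩
    exact ⟨p, v +ᵥ p, fun h => hv (by simpa using congrArg (· -ᵥ p) h.symm),
      setOf_smul_vadd_eq_affineSpan_pair p v⟩
  · rintro ⟨x, y, hxy, rfl⟩
    exact ⟨x, y -ᵥ x, vsub_ne_zero.2 hxy.symm, by
      rw [setOf_smul_vadd_eq_affineSpan_pair, vsub_vadd]⟩

def through {x y : P} (h : x ≠ y) : PLine k V P :=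
  ⟨line[k, x, y], isPLine_iff.2 ⟨x, y, h, rfl⟩⟩

theorem left_mem_through {x y : P} (h : x ≠ y) : x ∈ (through (k := k) h).1 :=
  left_mem_affineSpan_pair k x y

theorem right_mem_through {x y : P} (h : x ≠ y) : y ∈ (through (k := k) h).1 :=
  right_mem_affineSpan_pair k x y

theorem exists_ne_mem_mem (l : PLine k V P) : ∃ x y : P, x ≠ y ∧ x ∈ l.1 ∧ y ∈ l.1 := by
  obtain ⟨x, y, hxy, hl⟩ := isPLine_iff.1 l.2
  exact ⟨x, y, hxy, hl ▸ left_mem_affineSpan_pair k x y, hl ▸ right_mem_affineSpan_pair k x y⟩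

theorem nonempty (l : PLine k V P) : l.1.Nonempty :=
  let ⟨x, _, _, hx, _⟩ := l.exists_ne_mem_mem
  ⟨x, hx⟩

theorem collinear (l : PLine k V P) : Collinear k l.1 := by
  obtain ⟨x, y, -, hl⟩ := isPLine_iff.1 l.2
  rw [hl, Collinear, ← AffineSubspace.direction, direction_affineSpan]
  exact collinear_pair k x y

theorem eq_through (l : PLine k V P) {x y : P} (hx : x ∈ l.1) (hy : y ∈ l.1) (h : x ≠ y) :
    l = through h := by
  obtain ⟨p, q, -, hl⟩ := isPLine_iff.1 l.2
  apply Subtype.ext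
  show l.1 = line[k, x, y]
  rw [l.collinear.affineSpan_eq_of_ne hx hy h, hl, AffineSubspace.affineSpan_coe]

theorem eq_of_mem_of_mem {a b : PLine k V P} {x y : P} (hxa : x ∈ a.1) (hya : y ∈ a.1)
    (hxb : x ∈ b.1) (hyb : y ∈ b.1) (h : x ≠ y) : a = b :=
  (a.eq_through hxa hya h).trans (b.eq_through hxb hyb h).symm

theorem subset_of_mem_of_mem (l : PLine k V P) {σ : AffineSubspace k P} {x y : P}
    (hx : x ∈ l.1) (hy : y ∈ l.1) (h : x ≠ y) (hxσ : x ∈ σ) (hyσ : y ∈ σ) : l.1 ⊆ σ := by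
  rw [l.eq_through hx hy h]
  exact affineSpan_pair_le_of_mem_of_mem hxσ hyσ

theorem exists_mem_not_mem_of_ne {a b : PLine k V P} (hab : a ≠ b) : ∃ X ∈ b.1, X ∉ a.1 := by
  obtain ⟨x, y, hxy, hx, hy⟩ := b.exists_ne_mem_mem
  by_contra! h
  exact hab (eq_of_mem_of_mem (h x hx) (h y hy) hx hy hxy)

theorem exists_pair_ne_mem [Nontrivial (PLine k V P)] (Q : P) :
    ∃ a b : PLine k V P, a ≠ b ∧ Q ∈ a.1 ∧ Q ∈ b.1 := by
  obtain ⟨a, b, hab⟩ := exists_pair_ne (PLine k V P)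
  by_cases hQa : Q ∈ a.1
  · obtain ⟨X, -, hXa⟩ := exists_mem_not_mem_of_ne hab
    have hQX : Q ≠ X := fun h => hXa (h ▸ hQa)
    exact ⟨a, through hQX, fun h => hXa (h ▸ right_mem_through hQX), hQa, left_mem_through hQX⟩
  · obtain ⟨x, y, hxy, hx, hy⟩ := a.exists_ne_mem_mem
    have hQx : Q ≠ x := fun h => hQa (h ▸ hx)
    have hQy : Q ≠ y := fun h => hQa (h ▸ hy)
    refine ⟨through hQx, through hQy, fun h => hQa ?_, left_mem_through hQx, left_mem_through hQy⟩
    have hQxa : through (k := k) hQx = a :=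
      eq_of_mem_of_mem (right_mem_through hQx) (h ▸ right_mem_through hQy) hx hy hxy
    exact hQxa ▸ left_mem_through hQx

theorem exists_mem_meets (Q : P) (e : PLine k V P) :
    ∃ ℓ : PLine k V P, Q ∈ ℓ.1 ∧ PMeets k V P ℓ e := by
  obtain ⟨X, hXe⟩ := e.nonempty
  by_cases hQX : Q = X
  · exact ⟨e, hQX ▸ hXe, X, hXe, hXe⟩
  · exact ⟨through hQX, left_mem_through hQX, X, right_mem_through hQX, hXe⟩

theorem subset_affineSpan_of_meets_triangle {a b c e : PLine k V P} (hab : a ≠ b) {S A B : P}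
    (hSa : S ∈ a.1) (hSb : S ∈ b.1) (hSc : S ∉ c.1) (hAa : A ∈ a.1) (hAc : A ∈ c.1)
    (hBb : B ∈ b.1) (hBc : B ∈ c.1) (hea : PMeets k V P e a) (heb : PMeets k V P e b)
    (hec : PMeets k V P e c) : e.1 ⊆ affineSpan k {S, A, B} := by
  have hS : S ∈ affineSpan k {S, A, B} := subset_affineSpan k _ (by simp)
  have hA : A ∈ affineSpan k {S, A, B} := subset_affineSpan k _ (by simp)
  have hB : B ∈ affineSpan k {S, A, B} := subset_affineSpan k _ (by simp)
  have hSA : S ≠ A := fun h => hSc (h ▸ hAc)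
  have hSB : S ≠ B := fun h => hSc (h ▸ hBc)
  have hAB : A ≠ B := fun h => hab (eq_of_mem_of_mem hSa hAa hSb (h ▸ hBb) hSA)
  have ha := a.subset_of_mem_of_mem hSa hAa hSA hS hA
  have hb := b.subset_of_mem_of_mem hSb hBb hSB hS hB
  have hc := c.subset_of_mem_of_mem hAc hBc hAB hA hB
  obtain ⟨x, hxe, hxa⟩ := hea
  obtain ⟨y, hye, hyb⟩ := heb
  obtain ⟨z, hze, hzc⟩ := hec
  by_cases hxy : x = y
  · by_cases hxz : x = z
    · have hxS : x = S := by_contra fun h => hab (eq_of_mem_of_mem hxa hSa (hxy ▸ hyb) hSb h)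
      exact absurd (hxS ▸ hxz ▸ hzc) hSc
    · exact e.subset_of_mem_of_mem hxe hze hxz (ha hxa) (hc hzc)
  · exact e.subset_of_mem_of_mem hxe hye hxy (ha hxa) (hb hyb)

/-- Translating a line of `σ` by a vector outside the direction of `σ` moves it off `σ`. -/
theorem exists_disjoint_of_subset (l : PLine k V P) {σ : AffineSubspace k P} (hl : l.1 ⊆ σ)
    (hσ : σ.direction ≠ ⊤) : ∃ m : PLine k V P, Disjoint m.1 (σ : Set P) := by
  obtain ⟨v, hv⟩ : ∃ v : V, v ∉ σ.direction := by
    by_contra! h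
    exact hσ (eq_top_iff.2 fun v _ => h v)
  obtain ⟨x, y, hxy, hx, hy⟩ := l.exists_ne_mem_mem
  have hxy' : v +ᵥ x ≠ v +ᵥ y := fun h => hxy (vadd_left_cancel v h)
  refine ⟨through hxy', Set.disjoint_left.2 fun q hq hqσ => hv ?_⟩
  obtain ⟨t, rfl⟩ := mem_affineSpan_pair_iff_exists_lineMap_eq.1 hq
  have hyx : y -ᵥ x ∈ σ.direction := AffineSubspace.vsub_mem_direction (hl hy) (hl hx)
  have hqx := AffineSubspace.vsub_mem_direction hqσ (hl hx)
  rw [AffineMap.lineMap_apply, vadd_vsub_vadd_cancel_left, vadd_vsub_assoc, vadd_vsub] at hqx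
  simpa using σ.direction.sub_mem hqx (σ.direction.smul_mem t hyx)

theorem exists_disjoint (h3 : 3 ≤ Module.rank k V) (l : PLine k V P) :
    ∃ m : PLine k V P, Disjoint m.1 l.1 := by
  have hσ : (affineSpan k l.1).direction ≠ ⊤ := by
    rw [direction_affineSpan]
    exact l.collinear.coplanar.vectorSpan_ne_top h3
  obtain ⟨m, hm⟩ := l.exists_disjoint_of_subset (subset_affineSpan k l.1) hσ
  exact ⟨m, hm.mono_right (subset_affineSpan k l.1)⟩

theorem nontrivial_of_rank (h3 : 3 ≤ Module.rank k V) : Nontrivial (PLine k V P) := by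
  obtain ⟨v, hv⟩ := rank_pos_iff_exists_ne_zero.1 (lt_of_lt_of_le (by norm_num) h3)
  obtain ⟨p⟩ := (inferInstance : Nonempty P)
  have hp : p ≠ v +ᵥ p := fun h => hv (by simpa using congrArg (· -ᵥ p) h.symm)
  obtain ⟨m, hm⟩ := exists_disjoint h3 (through (k := k) hp)
  exact ⟨m, through hp, fun h =>
    Set.disjoint_left.1 hm (h ▸ left_mem_through hp) (left_mem_through hp)⟩

end PLine

section InducedPointMap

open PLine

variable {k V P k' V' P'} (φ : PLine k V P ≃ PLine k' V' P')

theorem exists_forall_mem_image_of_mem (h3 : 3 ≤ Module.rank k' V')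
    (hmono : ∀ a b : PLine k V P, PMeets k V P a b → PMeets k' V' P' (φ a) (φ b)) (Q : P) :
    ∃ S' : P', ∀ e : PLine k V P, Q ∈ e.1 → S' ∈ (φ e).1 := by
  have := nontrivial_of_rank (k := k') (P := P') h3
  have := φ.nontrivial
  obtain ⟨a, b, hab, hQa, hQb⟩ := exists_pair_ne_mem (k := k) (V := V) Q
  obtain ⟨S', hSa, hSb⟩ := hmono a b ⟨Q, hQa, hQb⟩
  refine ⟨S', fun c hQc => by_contra fun hSc => ?_⟩
  obtain ⟨A', hAa, hAc⟩ := hmono a c ⟨Q, hQa, hQc⟩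
  obtain ⟨B', hBb, hBc⟩ := hmono b c ⟨Q, hQb, hQc⟩
  have hplane : ∀ e, Q ∈ e.1 → (φ e).1 ⊆ affineSpan k' {S', A', B'} := fun e hQe =>
    subset_affineSpan_of_meets_triangle (φ.injective.ne hab) hSa hSb hSc hAa hAc hBb hBc
      (hmono e a ⟨Q, hQe, hQa⟩) (hmono e b ⟨Q, hQe, hQb⟩) (hmono e c ⟨Q, hQe, hQc⟩)
  have hσ : (affineSpan k' {S', A', B'}).direction ≠ ⊤ := by
    rw [direction_affineSpan]
    exact (coplanar_triple k' S' A' B').vectorSpan_ne_top h3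
  obtain ⟨m, hm⟩ := (φ a).exists_disjoint_of_subset (hplane a hQa) hσ
  obtain ⟨ℓ, hQℓ, hmeet⟩ := exists_mem_meets Q (φ.symm m)
  obtain ⟨y, hyℓ, hym⟩ := hmono ℓ (φ.symm m) hmeet
  rw [φ.apply_symm_apply] at hym
  exact Set.disjoint_left.1 hm hym (hplane ℓ hQℓ hyℓ)

variable {φ} {lam : P → P'} (hlam : ∀ (Q : P) (e : PLine k V P), Q ∈ e.1 → lam Q ∈ (φ e).1)
include hlam

/- If `lam Q = lam R` for `Q ≠ R`, then `lam` is constant off the line `QR`, so the image of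
every line passes through `lam Q`; but some line misses `lam Q`. -/
theorem injective_of_forall_mem (h3 : 3 ≤ Module.rank k' V') : Function.Injective lam := by
  intro Q R hQR
  by_contra hne
  set ℓ : PLine k V P := through hne
  have hoff : ∀ X ∉ ℓ.1, lam X = lam Q := by
    intro X hXℓ
    have hXQ : X ≠ Q := fun h => hXℓ (h ▸ left_mem_through hne)
    have hXR : X ≠ R := fun h => hXℓ (h ▸ right_mem_through hne)
    by_contra h
    have hXQR : through (k := k) hXQ = through hXR := φ.injective <| eq_of_mem_of_mem
      (hlam X _ (left_mem_through hXQ)) (hlam Q _ (right_mem_through hXQ))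
      (hlam X _ (left_mem_through hXR)) (hQR ▸ hlam R _ (right_mem_through hXR)) h
    have hXQℓ : through (k := k) hXQ = ℓ := eq_of_mem_of_mem (right_mem_through hXQ)
      (hXQR ▸ right_mem_through hXR) (left_mem_through hne) (right_mem_through hne) hne
    exact hXℓ (hXQℓ ▸ left_mem_through hXQ)
  have hall : ∀ d : PLine k V P, lam Q ∈ (φ d).1 := by
    intro d
    by_cases hd : d = ℓ
    · exact hd ▸ hlam Q ℓ (left_mem_through hne)
    · obtain ⟨X, hXd, hXℓ⟩ := exists_mem_not_mem_of_ne (Ne.symm hd)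
      exact hoff X hXℓ ▸ hlam X d hXd
  obtain ⟨m, hm⟩ := exists_disjoint h3 (φ ℓ)
  exact Set.disjoint_left.1 hm (by simpa using hall (φ.symm m)) (hlam Q ℓ (left_mem_through hne))

theorem mem_of_map_mem (hinj : Function.Injective lam) {Q : P} {e : PLine k V P}
    (h : lam Q ∈ (φ e).1) : Q ∈ e.1 := by
  by_contra hQe
  obtain ⟨X, hXe⟩ := e.nonempty
  have hXQ : X ≠ Q := fun h => hQe (h ▸ hXe)
  have hℓe : through (k := k) hXQ = e := φ.injective <| eq_of_mem_of_mem
    (hlam X _ (left_mem_through hXQ)) (hlam Q _ (right_mem_through hXQ)) (hlam X e hXe) h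
    (hinj.ne hXQ)
  exact hQe (hℓe ▸ right_mem_through hXQ)

theorem image_setOf_mem_eq (hinj : Function.Injective lam) (Q : P) :
    φ '' {l : PLine k V P | Q ∈ l.1} = {l' : PLine k' V' P' | lam Q ∈ l'.1} := by
  ext l'
  refine ⟨?_, fun hl' => ⟨φ.symm l', mem_of_map_mem hlam hinj ?_, φ.apply_symm_apply l'⟩⟩
  · rintro ⟨e, hQe, rfl⟩
    exact hlam Q e hQe
  · rwa [φ.apply_symm_apply]

theorem collinear_iff_of_forall_mem (hinj : Function.Injective lam) (Q R S : P) :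
    Collinear k ({Q, R, S} : Set P) ↔ Collinear k' ({lam Q, lam R, lam S} : Set P') := by
  by_cases hQR : Q = R
  · subst hQR
    simp only [Set.insert_eq_of_mem (Set.mem_insert _ _), collinear_pair]
  rw [collinear_triple_iff_of_ne hQR, collinear_triple_iff_of_ne (hinj.ne hQR)]
  have hφℓ : (φ (through hQR)).1 = line[k', lam Q, lam R] :=
    congrArg Subtype.val <| (φ (through hQR)).eq_through (hlam Q _ (left_mem_through hQR))
      (hlam R _ (right_mem_through hQR)) (hinj.ne hQR)
  rw [← SetLike.mem_coe (x := lam S), ← hφℓ]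
  exact ⟨hlam S (through hQR), mem_of_map_mem hlam hinj⟩

end InducedPointMap

/-- For a bijection `φ` of line sets with `dim A' ≥ 3` taking meeting lines to meeting
lines, the induced point map `λ` (sending `a ∩ b` to `φ a ∩ φ b` for adjacent lines) is a
well-defined injection preserving collinearity and non-collinearity, and `φ` maps the star
of `Q` onto the star of `λ Q`. -/
theorem stmt13 (hdim' : 3 ≤ Module.rank k' V')
    (φ : PLine k V P ≃ PLine k' V' P')
    (hmono : ∀ a b : PLine k V P, PMeets k V P a b → PMeets k' V' P' (φ a) (φ b)) :
    ∃ lam : P → P',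
      Function.Injective lam ∧
      (∀ a b : PLine k V P, a ≠ b → ∀ Q : P, Q ∈ a.1 ∩ b.1 →
        lam Q ∈ (φ a).1 ∩ (φ b).1) ∧
      (∀ Q R S : P,
        Collinear k ({Q, R, S} : Set P) ↔
          Collinear k' ({lam Q, lam R, lam S} : Set P')) ∧
      (∀ Q : P, ⇑φ '' {l : PLine k V P | Q ∈ l.1} =
        {l' : PLine k' V' P' | lam Q ∈ l'.1}) := by
  choose lam hlam using exists_forall_mem_image_of_mem φ hdim' hmono
  have hinj := injective_of_forall_mem hlam hdim'
  exact ⟨lam, hinj, fun a b _ Q hQ => ⟨hlam Q a hQ.1, hlam Q b hQ.2⟩,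
    collinear_iff_of_forall_mem hlam hinj, image_setOf_mem_eq hlam hinj⟩
end

section
/- If there exists a bijection between the line sets of the finite affine spaces AG(n, 2) and AG(m, p^h) (n, m ≥ 3, p prime, h ≥ 1) that maps every star of lines bijectively onto a star of lines, then p = 2, h = 1 and n = m. -/
variable (k V P : Type*) [DivisionRing k] [AddCommGroup V] [Module k V] [AddTorsor V P]

/-! A bijection of line sets mapping stars onto stars preserves the number `L` of lines and the
size `s` of a star. The lines through a point of `AG(d, q)` correspond to the points of the
projective space over the direction space, so `s * (q - 1) = q ^ d - 1`, and double counting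
point-line incidences gives `L * q = q ^ d * s`. For `AG(n, 2)` and `AG(m, q)` this yields
`2 ^ n * q = 2 * q ^ m` and `(2 ^ n - 1) * (q - 1) = q ^ m - 1`, which together force
`(q - 2) * (q ^ m - q) = 0`; hence `q = 2`, and then `n = m`. -/

open Projectivization
open scoped LinearAlgebra.Projectivization

section Lines

variable {V P}

def lineThrough (Q : P) (v : V) : Set P := {q | ∃ t : k, q = t • v +ᵥ Q}

variable {k}

lemma lineThrough_isPLine (Q : P) {v : V} (hv : v ≠ 0) :
    IsPLine k V P (lineThrough k Q v) :=
  ⟨Q, v, hv, rfl⟩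

lemma mem_lineThrough_self (Q : P) (v : V) : Q ∈ lineThrough k Q v :=
  ⟨0, by rw [zero_smul, zero_vadd]⟩

lemma lineThrough_eq_of_mem {p Q : P} {v : V} (hQ : Q ∈ lineThrough k p v) :
    lineThrough k p v = lineThrough k Q v := by
  obtain ⟨t₀, rfl⟩ := hQ
  ext q
  constructor
  · rintro ⟨t, rfl⟩
    exact ⟨t - t₀, by rw [vadd_vadd, ← add_smul, sub_add_cancel]⟩
  · rintro ⟨t, rfl⟩
    exact ⟨t + t₀, by rw [vadd_vadd, ← add_smul]⟩

lemma lineThrough_eq_lineThrough_iff (Q : P) {v w : V} (hv : v ≠ 0) :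
    lineThrough k Q v = lineThrough k Q w ↔ ∃ c : k, c • w = v := by
  constructor
  · intro h
    obtain ⟨c, hc⟩ : v +ᵥ Q ∈ lineThrough k Q w := h ▸ ⟨1, by rw [one_smul]⟩
    exact ⟨c, (vadd_right_cancel Q hc).symm⟩
  · rintro ⟨c, rfl⟩
    have hc : c ≠ 0 := by rintro rfl; exact hv (zero_smul k w)
    ext q
    constructor
    · rintro ⟨t, rfl⟩
      exact ⟨t * c, by rw [mul_smul]⟩
    · rintro ⟨t, rfl⟩
      exact ⟨t * c⁻¹, by rw [smul_smul, mul_assoc, inv_mul_cancel₀ hc, mul_one]⟩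

noncomputable def projectivizationEquivStar (Q : P) : ℙ k V ≃ {l : PLine k V P | Q ∈ l.1} :=
  Equiv.ofBijective
    (Projectivization.lift
      (fun v => ⟨⟨lineThrough k Q v.1, lineThrough_isPLine Q v.2⟩, mem_lineThrough_self Q v.1⟩)
      fun v w c hvw => by
        simp only [Subtype.mk.injEq]
        exact (lineThrough_eq_lineThrough_iff Q v.2).2 ⟨c, hvw.symm⟩)
    ⟨fun x y hxy => by
      induction x using Projectivization.ind with | h v hv => ?_
      induction y using Projectivization.ind with | h w _ => ?_
      rw [mk_eq_mk_iff']
      exact (lineThrough_eq_lineThrough_iff Q hv).1 (congrArg (·.1.1) hxy),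
    fun ⟨⟨s, p, v, hv, hs⟩, hQ⟩ => ⟨mk k v hv, by
      subst hs
      exact Subtype.ext (Subtype.ext (lineThrough_eq_of_mem hQ).symm)⟩⟩

lemma card_star (Q : P) : Nat.card {l : PLine k V P | Q ∈ l.1} = Nat.card (ℙ k V) :=
  (Nat.card_congr (projectivizationEquivStar Q)).symm

lemma card_line (l : PLine k V P) : Nat.card l.1 = Nat.card k := by
  obtain ⟨s, p, v, hv, rfl⟩ := l
  refine (Nat.card_congr (Equiv.ofBijective (fun t : k => ⟨t • v +ᵥ p, t, rfl⟩) ⟨?_, ?_⟩)).symm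
  · intro t t' h
    exact smul_left_injective k hv (vadd_right_cancel p (congrArg Subtype.val h))
  · rintro ⟨q, t, rfl⟩
    exact ⟨t, rfl⟩

variable (k V P) in
lemma card_pLine_mul_card [Finite P] :
    Nat.card (PLine k V P) * Nat.card k = Nat.card P * Nat.card (ℙ k V) := by
  classical
  have : Fintype P := Fintype.ofFinite P
  have : Fintype (PLine k V P) := Fintype.ofFinite _
  let incidences : (Σ l : PLine k V P, l.1) ≃ Σ Q : P, {l : PLine k V P | Q ∈ l.1} :=
    { toFun := fun x => ⟨x.2.1, x.1, x.2.2⟩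
      invFun := fun y => ⟨y.2.1, y.1, y.2.2⟩
      left_inv := fun _ => rfl
      right_inv := fun _ => rfl }
  simpa only [Nat.card_sigma, card_line, card_star, Finset.sum_const, Finset.card_univ,
    smul_eq_mul, Fintype.card_eq_nat_card] using Nat.card_congr incidences

end Lines

lemma eq_two_and_eq_of_star_and_line_counts {q n m s L : ℕ} (hq : 2 ≤ q) (hm : 2 ≤ m)
    (hs₂ : 2 ^ n - 1 = s * (2 - 1)) (hsq : q ^ m - 1 = s * (q - 1))
    (hL₂ : L * 2 = 2 ^ n * s) (hLq : L * q = q ^ m * s) : q = 2 ∧ n = m := by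
  have hqm : q < q ^ m := lt_self_pow₀ hq hm
  have hs : 0 < s := Nat.pos_of_ne_zero fun hs => by
    rw [hs, zero_mul] at hsq
    omega
  have hpts : 2 ^ n * q = 2 * q ^ m :=
    Nat.eq_of_mul_eq_mul_right hs (by linarith [congrArg (· * q) hL₂, congrArg (· * 2) hLq])
  have hq₂ : q = 2 := by
    have h2n : 1 ≤ 2 ^ n := Nat.one_le_two_pow
    zify [h2n, hqm.le.trans' (by omega : 1 ≤ q), (by omega : 1 ≤ q)] at hs₂ hsq hpts hqm
    have : ((q : ℤ) - 2) * ((q : ℤ) ^ m - q) = 0 := by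
      linear_combination (1 - (q : ℤ)) * hpts - q * hsq + q * ((q : ℤ) - 1) * hs₂
    rcases mul_eq_zero.1 this with h | h <;> omega
  subst hq₂
  exact ⟨rfl, Nat.pow_right_injective le_rfl (by omega : 2 ^ n = 2 ^ m)⟩

theorem stmt18_general (n m p h : ℕ) [Fact p.Prime] (hm : 3 ≤ m) (hh : 1 ≤ h)
    (φ : PLine (ZMod 2) (Fin n → ZMod 2) (Fin n → ZMod 2) ≃
      PLine (GaloisField p h) (Fin m → GaloisField p h) (Fin m → GaloisField p h))
    (hstar : ∀ Q : Fin n → ZMod 2, ∃ Q' : Fin m → GaloisField p h,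
      ⇑φ '' {l : PLine (ZMod 2) (Fin n → ZMod 2) (Fin n → ZMod 2) | Q ∈ l.1} =
        {l' : PLine (GaloisField p h) (Fin m → GaloisField p h)
          (Fin m → GaloisField p h) | Q' ∈ l'.1}) :
    p = 2 ∧ h = 1 ∧ n = m := by
  obtain ⟨Q', hQ'⟩ := hstar 0
  have hq : Nat.card (GaloisField p h) = p ^ h := GaloisField.card p h (by omega)
  have hstars : Nat.card (ℙ (ZMod 2) (Fin n → ZMod 2)) =
      Nat.card (ℙ (GaloisField p h) (Fin m → GaloisField p h)) := by
    rw [← card_star (0 : Fin n → ZMod 2), ← card_star Q', ← hQ',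
      Nat.card_image_of_injective φ.injective]
  have hlines₂ := card_pLine_mul_card (ZMod 2) (Fin n → ZMod 2) (Fin n → ZMod 2)
  have hlines := card_pLine_mul_card (GaloisField p h) (Fin m → GaloisField p h)
    (Fin m → GaloisField p h)
  have hpoints₂ := Projectivization.card (ZMod 2) (Fin n → ZMod 2)
  have hpoints := Projectivization.card (GaloisField p h) (Fin m → GaloisField p h)
  rw [← Nat.card_congr φ, ← hstars] at hlines
  rw [← hstars] at hpoints
  simp only [Nat.card_fun, Nat.card_zmod, Nat.card_fin, hq] at hlines₂ hlines hpoints₂ hpoints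
  have hq₂ : 2 ≤ p ^ h := Nat.one_lt_pow (by omega) (Fact.out : p.Prime).one_lt
  obtain ⟨hp, rfl⟩ :=
    eq_two_and_eq_of_star_and_line_counts hq₂ (by omega) hpoints₂ hpoints hlines₂ hlines
  obtain ⟨rfl, rfl⟩ := Nat.prime_two.pow_eq_iff.1 hp
  exact ⟨rfl, rfl, rfl⟩

/-- If there is a bijection between the line sets of `AG(n, 2)` and `AG(m, p^h)`
(`n, m ≥ 3`, `p` prime, `h ≥ 1`) mapping every star of lines onto a star of lines, then
`p = 2`, `h = 1` and `n = m`. -/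
theorem stmt18 (n m p h : ℕ) [Fact p.Prime] (hn : 3 ≤ n) (hm : 3 ≤ m) (hh : 1 ≤ h)
    (φ : PLine (ZMod 2) (Fin n → ZMod 2) (Fin n → ZMod 2) ≃
      PLine (GaloisField p h) (Fin m → GaloisField p h) (Fin m → GaloisField p h))
    (hstar : ∀ Q : Fin n → ZMod 2, ∃ Q' : Fin m → GaloisField p h,
      ⇑φ '' {l : PLine (ZMod 2) (Fin n → ZMod 2) (Fin n → ZMod 2) | Q ∈ l.1} =
        {l' : PLine (GaloisField p h) (Fin m → GaloisField p h)
          (Fin m → GaloisField p h) | Q' ∈ l'.1}) :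
    p = 2 ∧ h = 1 ∧ n = m :=
  stmt18_general n m p h hm hh φ hstar
end
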